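/- If (M,d) is a compact metric space and a sequence of Borel probability measures P_k converges weakly to Q, then the p-centrality functions σ_{P_k,p} converge uniformly to σ_{Q,p}. -/

import Mathlib

open MeasureTheory Real

/-- The `p`-centrality function of a measure. -/
noncomputable def pCentrality {M : Type*} [PseudoMetricSpace M] [MeasurableSpace M]
    (P : Measure M) (p : ℝ) (x : M) : ℝ :=
  (∫ y, dist x y ^ p ∂P) ^ (1 / p)

/-- The `p`-Wasserstein distance, as an infimum over couplings. -/
noncomputable def wassersteinDist {M : Type*} [PseudoMetricSpace M] [MeasurableSpace M]
    (p : ℝ) (P Q : Measure M) : ℝ :=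
  sInf { r : ℝ | ∃ γ : Measure (M × M), γ.map Prod.fst = P ∧ γ.map Prod.snd = Q ∧
      r = (∫ z, dist z.1 z.2 ^ p ∂γ) ^ (1 / p) }

/-- The maximal `p`-centrality discrepancy with `n`-dimensional critic output. -/
noncomputable def maxPCentralityDiscrepancy {M : Type*} [PseudoMetricSpace M]
    [MeasurableSpace M] (p : ℝ) (n : ℕ) (K : NNReal) (P Q : Measure M) : ℝ :=
  ⨆ f : {f : M → EuclideanSpace ℝ (Fin n) // LipschitzWith K f},
    (∫ y, ‖f.1 y‖ ^ p ∂P) ^ (1 / p) - (∫ y, ‖f.1 y‖ ^ p ∂Q) ^ (1 / p)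

/-!
`σ_{P,p}(x)` is the `L^p(P)`-norm of `d(x, ·)`, and `x ↦ d(x, ·)` is `1`-Lipschitz into `L^p(P)`
because `|d(x, y) - d(x', y)| ≤ d(x, x')`; hence all `σ_{P_k,p}` are `1`-Lipschitz. Weak
convergence gives pointwise convergence, as `d(x, ·)^p` is bounded and continuous, and on a compact
space pointwise convergence of an equicontinuous family is uniform.
-/

open Filter Topology

section DistLp

variable {M : Type*} [PseudoMetricSpace M] [BoundedSpace M] [MeasurableSpace M]
  [OpensMeasurableSpace M]

theorem memLp_dist (μ : Measure M) [IsFiniteMeasure μ] (q : ENNReal) (x : M) :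
    MemLp (dist x ·) q μ :=
  .of_bound (by fun_prop) (Metric.diam (Set.univ : Set M)) <| ae_of_all _ fun y => by
    simpa using Metric.dist_le_diam_of_mem (Bornology.isBounded_univ.2 ‹_›) (Set.mem_univ x)
      (Set.mem_univ y)

noncomputable def distLp (μ : Measure M) [IsFiniteMeasure μ] (q : ENNReal) (x : M) : Lp ℝ q μ :=
  (memLp_dist μ q x).toLp (dist x ·)

theorem lipschitzWith_distLp (μ : Measure M) [IsProbabilityMeasure μ] (q : ENNReal)
    [Fact (1 ≤ q)] : LipschitzWith 1 (distLp μ q) := by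
  refine LipschitzWith.of_edist_le fun x x' => ?_
  rw [distLp, distLp, Lp.edist_toLp_toLp, edist_dist]
  refine (eLpNorm_le_of_ae_bound (C := dist x x') (ae_of_all _ fun y => ?_)).trans_eq (by simp)
  simpa [Real.dist_eq] using abs_dist_sub_le x x' y

theorem pCentrality_eq_norm_distLp (μ : Measure M) [IsFiniteMeasure μ] {q : ENNReal}
    [Fact (1 ≤ q)] (hq : q ≠ ⊤) (x : M) : pCentrality μ q.toReal x = ‖distLp μ q x‖ := by
  have hq0 : q ≠ 0 := (zero_lt_one.trans_le Fact.out).ne'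
  rw [distLp, Lp.norm_toLp, (memLp_dist μ q x).eLpNorm_eq_integral_rpow_norm hq0 hq,
    ENNReal.toReal_ofReal (by positivity), pCentrality, one_div]
  simp_rw [Real.norm_of_nonneg dist_nonneg]

theorem lipschitzWith_pCentrality (μ : Measure M) [IsProbabilityMeasure μ] {p : ℝ}
    (hp : 1 ≤ p) : LipschitzWith 1 (pCentrality μ p) := by
  have : Fact (1 ≤ ENNReal.ofReal p) := ⟨ENNReal.one_le_ofReal.2 hp⟩
  have hnorm : pCentrality μ p = fun x => ‖distLp μ (ENNReal.ofReal p) x‖ := by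
    ext x
    rw [← pCentrality_eq_norm_distLp μ ENNReal.ofReal_ne_top,
      ENNReal.toReal_ofReal (zero_le_one.trans hp)]
  simpa only [hnorm, one_mul, Function.comp_def] using
    lipschitzWith_one_norm.comp (lipschitzWith_distLp μ (ENNReal.ofReal p))

end DistLp

theorem tendsto_pCentrality_of_tendsto {M : Type*} [PseudoMetricSpace M] [CompactSpace M]
    [MeasurableSpace M] [OpensMeasurableSpace M] {ι : Type*} {L : Filter ι}
    {P : ι → ProbabilityMeasure M} {Q : ProbabilityMeasure M} (h : Tendsto P L (𝓝 Q))
    {p : ℝ} (hp : 0 ≤ p) (x : M) :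
    Tendsto (fun i => pCentrality (P i : Measure M) p x) L
      (𝓝 (pCentrality (Q : Measure M) p x)) := by
  let f : BoundedContinuousFunction M ℝ :=
    .mkOfCompact ⟨fun y => dist x y ^ p, by fun_prop (disch := exact fun _ => Or.inr hp)⟩
  exact (ProbabilityMeasure.tendsto_iff_forall_integral_tendsto.1 h f).rpow_const
    (Or.inr (by positivity))

theorem pCentrality_tendstoUniformly_of_weak_convergence {M : Type*} [MetricSpace M]
    [MeasurableSpace M] [BorelSpace M] [CompactSpace M] (p : ℝ) (hp : 1 ≤ p)
    (P : ℕ → ProbabilityMeasure M) (Q : ProbabilityMeasure M)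
    (h : Filter.Tendsto P Filter.atTop (nhds Q)) :
    TendstoUniformly (fun k x => pCentrality (P k : Measure M) p x)
      (pCentrality (Q : Measure M) p) Filter.atTop := by
  have hequi : Equicontinuous fun k => pCentrality (P k : Measure M) p :=
    (LipschitzWith.uniformEquicontinuous _ 1 fun k =>
      lipschitzWith_pCentrality _ hp).equicontinuous
  have hpointwise := tendsto_pi_nhds.2 fun x =>
    tendsto_pCentrality_of_tendsto h (zero_le_one.trans hp) x
  exact UniformFun.tendsto_iff_tendstoUniformly.1
    ((hequi.tendsto_uniformFun_iff_pi _ _).2 hpointwise)
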